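/- arXiv:2405.20213 — 5 statements merged into one kernel-verified Lean document; each statement's English description precedes it below -/
import Mathlib

section
/- With g defined as g(A) = (∑_{x∈A} x_u)(|D| + ∑_{y∈D\A} y_u) + ∑_{x∈A_I} ∑_{y∈A_T} x_u y_u, and assuming all coordinate values are nonnegative and each e_u ≤ 1 (so that ∑_{x∈A} x_u ≤ |D| and ∑_{x∈A} x_u ≤ ∑_{y∈D} y_u for A ⊆ D), the function g is monotone: for A ⊆ D and p ∈ D \ A, g(A ∪ {p}) ≥ g(A). -/
/-- g is monotone. -/
theorem g_monotone
    {E : Type*} [DecidableEq E] (D I T A : Finset E) (v : E → ℝ)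
    (hpart : I ∪ T = D) (hdisj : Disjoint I T)
    (hA : A ⊆ D)
    (hnonneg : ∀ e ∈ D, 0 ≤ v e) (hle : ∀ e ∈ D, v e ≤ 1)
    (g : Finset E → ℝ)
    (hg : ∀ S : Finset E,
      g S = (∑ x ∈ S, v x) * ((D.card : ℝ) + ∑ y ∈ D \ S, v y)
            + ∑ x ∈ S ∩ I, ∑ y ∈ S ∩ T, v x * v y)
    (p : E) (hp : p ∈ D \ A) :
    g A ≤ g (insert p A) := by
  obtain ⟨hpD, hpA⟩ := Finset.mem_sdiff.mp hp
  rw [hg, hg]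
  set s := ∑ x ∈ A, v x with hs
  set r' := ∑ y ∈ D \ insert p A, v y with hr'
  have hsum1 : ∑ x ∈ insert p A, v x = v p + s := Finset.sum_insert hpA
  have hsdiff : D \ insert p A = (D \ A).erase p := by
    ext x; simp [Finset.mem_sdiff, Finset.mem_erase, Finset.mem_insert]; tauto
  have hsum2 : ∑ y ∈ D \ A, v y = v p + r' := by
    rw [hr', hsdiff, Finset.add_sum_erase _ _ hp]
  have hvp : 0 ≤ v p := hnonneg p hpD
  have hr'nn : 0 ≤ r' := Finset.sum_nonneg fun x hx =>
    hnonneg x (Finset.mem_sdiff.mp hx).1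
  have hcard : v p + s ≤ (D.card : ℝ) := by
    have h1 : ∑ x ∈ insert p A, v x ≤ ((insert p A).card : ℝ) := by
      calc ∑ x ∈ insert p A, v x ≤ ∑ _x ∈ insert p A, (1 : ℝ) :=
            Finset.sum_le_sum fun x hx => hle x (by
              rcases Finset.mem_insert.mp hx with h | h
              · exact h ▸ hpD
              · exact hA h)
        _ = ((insert p A).card : ℝ) := by simp
    have h2 : (insert p A).card ≤ D.card :=
      Finset.card_le_card (Finset.insert_subset hpD hA)
    rw [hsum1] at h1
    exact h1.trans (by exact_mod_cast h2)
  have hfirst : s * ((D.card : ℝ) + ∑ y ∈ D \ A, v y) ≤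
      (∑ x ∈ insert p A, v x) * ((D.card : ℝ) + r') := by
    rw [hsum1, hsum2]
    nlinarith [hvp, hr'nn, hcard]
  have hsecond : ∑ x ∈ A ∩ I, ∑ y ∈ A ∩ T, v x * v y ≤
      ∑ x ∈ (insert p A) ∩ I, ∑ y ∈ (insert p A) ∩ T, v x * v y := by
    have hnnD : ∀ S ⊆ D, ∀ f : E → ℝ, (∀ x ∈ D, 0 ≤ f x) →
        0 ≤ ∑ x ∈ S, f x := fun S hS f hf =>
      Finset.sum_nonneg fun x hx => hf x (hS hx)
    have hID : I ⊆ D := hpart ▸ Finset.subset_union_left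
    have hTD : T ⊆ D := hpart ▸ Finset.subset_union_right
    have hAI : A ∩ I ⊆ D := fun x hx => hA (Finset.mem_inter.mp hx).1
    have hAT : A ∩ T ⊆ D := fun x hx => hA (Finset.mem_inter.mp hx).1
    by_cases hpI : p ∈ I
    · have hpT : p ∉ T := fun h => (Finset.disjoint_left.mp hdisj hpI) h
      have e1 : (insert p A) ∩ I = insert p (A ∩ I) :=
        Finset.insert_inter_of_mem hpI
      have e2 : (insert p A) ∩ T = A ∩ T :=
        Finset.insert_inter_of_notMem hpT
      rw [e1, e2, Finset.sum_insert (by simp [hpA])]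
      have : 0 ≤ ∑ y ∈ A ∩ T, v p * v y :=
        Finset.sum_nonneg fun y hy =>
          mul_nonneg hvp (hnonneg y (hAT hy))
      linarith
    · have hpT : p ∈ T := by
        have := hpart ▸ hpD
        rcases Finset.mem_union.mp this with h | h
        · exact absurd h hpI
        · exact h
      have e1 : (insert p A) ∩ I = A ∩ I :=
        Finset.insert_inter_of_notMem hpI
      have e2 : (insert p A) ∩ T = insert p (A ∩ T) :=
        Finset.insert_inter_of_mem hpT
      rw [e1, e2]
      have hrw : ∀ x, ∑ y ∈ insert p (A ∩ T), v x * v y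
          = v x * v p + ∑ y ∈ A ∩ T, v x * v y := fun x =>
        Finset.sum_insert (by simp [hpA])
      simp only [hrw]
      rw [Finset.sum_add_distrib]
      have : 0 ≤ ∑ x ∈ A ∩ I, v x * v p :=
        Finset.sum_nonneg fun x hx =>
          mul_nonneg (hnonneg x (hAI hx)) hvp
      linarith
  exact add_le_add hfirst hsecond
end

section
/- With g defined as g(A) = (∑_{x∈A} x_u)(|D| + ∑_{y∈D\A} y_u) + ∑_{x∈A_I} ∑_{y∈A_T} x_u y_u and all values nonnegative, g is submodular: for A ⊆ B ⊆ D and p ∈ D \ B, g(A ∪ {p}) − g(A) ≥ g(B ∪ {p}) − g(B). -/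
/-- g is submodular. -/
theorem g_submodular
    {E : Type*} [DecidableEq E] (D I T A B : Finset E) (v : E → ℝ)
    (hpart : I ∪ T = D) (hdisj : Disjoint I T)
    (hAB : A ⊆ B) (hB : B ⊆ D)
    (hnonneg : ∀ e ∈ D, 0 ≤ v e)
    (g : Finset E → ℝ)
    (hg : ∀ S : Finset E,
      g S = (∑ x ∈ S, v x) * ((D.card : ℝ) + ∑ y ∈ D \ S, v y)
            + ∑ x ∈ S ∩ I, ∑ y ∈ S ∩ T, v x * v y)
    (p : E) (hp : p ∈ D \ B) :
    g (insert p B) - g B ≤ g (insert p A) - g A := by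
  rw [Finset.mem_sdiff] at hp
  obtain ⟨hpD, hpB⟩ := hp
  have hpA : p ∉ A := fun h => hpB (hAB h)
  have hAD : A ⊆ D := hAB.trans hB
  have wnn : 0 ≤ v p := hnonneg p hpD
  -- sum over D \ insert p S
  have hsd : ∀ S : Finset E, S ⊆ D → p ∉ S →
      ∑ y ∈ D \ insert p S, v y = (∑ y ∈ D \ S, v y) - v p := by
    intro S hSD hpS
    have hmem : p ∈ D \ S := Finset.mem_sdiff.mpr ⟨hpD, hpS⟩
    have hset : D \ insert p S = (D \ S).erase p := by
      ext x
      simp only [Finset.mem_sdiff, Finset.mem_erase, Finset.mem_insert]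
      tauto
    rw [hset, Finset.sum_erase_eq_sub hmem]
  -- split of sums over S into I and T parts
  have hITsplit : ∀ S : Finset E, S ⊆ D →
      (∑ x ∈ S ∩ I, v x) + (∑ x ∈ S ∩ T, v x) = ∑ x ∈ S, v x := by
    intro S hSD
    have hST : S ∩ T = S \ I := by
      ext x
      simp only [Finset.mem_inter, Finset.mem_sdiff]
      constructor
      · rintro ⟨hxS, hxT⟩
        exact ⟨hxS, fun hxI => Finset.disjoint_left.mp hdisj hxI hxT⟩
      · rintro ⟨hxS, hxI⟩
        have hxD : x ∈ I ∪ T := hpart ▸ hSD hxS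
        rcases Finset.mem_union.mp hxD with h | h
        · exact absurd h hxI
        · exact ⟨hxS, h⟩
    rw [hST, Finset.sum_inter_add_sum_sdiff]
  have hDA := Finset.sum_sdiff (f := v) hAD
  have hDB := Finset.sum_sdiff (f := v) hB
  have hsplA := hITsplit A hAD
  have hsplB := hITsplit B hB
  have hab : (∑ x ∈ A, v x) ≤ ∑ x ∈ B, v x :=
    Finset.sum_le_sum_of_subset_of_nonneg hAB
      (fun i hi _ => hnonneg i (hB hi))
  have habI : (∑ x ∈ A ∩ I, v x) ≤ ∑ x ∈ B ∩ I, v x :=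
    Finset.sum_le_sum_of_subset_of_nonneg
      (Finset.inter_subset_inter hAB Finset.Subset.rfl)
      (fun i hi _ => hnonneg i (hB (Finset.mem_inter.mp hi).1))
  have habT : (∑ x ∈ A ∩ T, v x) ≤ ∑ x ∈ B ∩ T, v x :=
    Finset.sum_le_sum_of_subset_of_nonneg
      (Finset.inter_subset_inter hAB Finset.Subset.rfl)
      (fun i hi _ => hnonneg i (hB (Finset.mem_inter.mp hi).1))
  have hpIT : p ∈ I ∨ p ∈ T := Finset.mem_union.mp (hpart ▸ hpD)
  rcases hpIT with hpI | hpT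
  · -- p ∈ I
    have hpT : p ∉ T := fun h => Finset.disjoint_left.mp hdisj hpI h
    have key : ∀ S : Finset E, S ⊆ D → p ∉ S →
        g (insert p S) = (v p + ∑ x ∈ S, v x) *
            ((D.card : ℝ) + ((∑ y ∈ D \ S, v y) - v p))
          + (v p * ∑ y ∈ S ∩ T, v y
            + ∑ x ∈ S ∩ I, ∑ y ∈ S ∩ T, v x * v y) := by
      intro S hSD hpS
      have hpSI : p ∉ S ∩ I := fun h => hpS (Finset.mem_inter.mp h).1
      rw [hg, Finset.sum_insert hpS, hsd S hSD hpS,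
        Finset.insert_inter_of_mem hpI, Finset.insert_inter_of_notMem hpT,
        Finset.sum_insert hpSI, ← Finset.mul_sum]
    rw [key A hAD hpA, key B hB hpB, hg A, hg B]
    have hlin : (∑ y ∈ D \ B, v y) + (∑ y ∈ B ∩ T, v y) - ∑ x ∈ B, v x
        ≤ (∑ y ∈ D \ A, v y) + (∑ y ∈ A ∩ T, v y) - ∑ x ∈ A, v x := by
      linarith
    nlinarith [mul_le_mul_of_nonneg_left hlin wnn]
  · -- p ∈ T
    have hpI : p ∉ I := fun h => Finset.disjoint_left.mp hdisj h hpT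
    have key : ∀ S : Finset E, S ⊆ D → p ∉ S →
        g (insert p S) = (v p + ∑ x ∈ S, v x) *
            ((D.card : ℝ) + ((∑ y ∈ D \ S, v y) - v p))
          + ((∑ x ∈ S ∩ I, v x) * v p
            + ∑ x ∈ S ∩ I, ∑ y ∈ S ∩ T, v x * v y) := by
      intro S hSD hpS
      have hpST : p ∉ S ∩ T := fun h => hpS (Finset.mem_inter.mp h).1
      rw [hg, Finset.sum_insert hpS, hsd S hSD hpS,
        Finset.insert_inter_of_notMem hpI, Finset.insert_inter_of_mem hpT]
      have : ∀ x ∈ S ∩ I, (∑ y ∈ insert p (S ∩ T), v x * v y)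
          = v x * v p + ∑ y ∈ S ∩ T, v x * v y := by
        intro x _
        rw [Finset.sum_insert hpST]
      rw [Finset.sum_congr rfl this, Finset.sum_add_distrib, ← Finset.sum_mul]
    rw [key A hAD hpA, key B hB hpB, hg A, hg B]
    have hlin : (∑ y ∈ D \ B, v y) + (∑ y ∈ B ∩ I, v y) - ∑ x ∈ B, v x
        ≤ (∑ y ∈ D \ A, v y) + (∑ y ∈ A ∩ I, v y) - ∑ x ∈ A, v x := by
      linarith
    nlinarith [mul_le_mul_of_nonneg_left hlin wnn]
end

section
/- If g : Finset E → ℝ is a nonnegative monotone submodular set function and r : ℝ → ℝ is nondecreasing and concave on [0, ∞), then the composition A ↦ r(g(A)) is a monotone submodular set function. -/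
/-- Translation inequality for a concave nondecreasing function on `[0, ∞)`. -/
lemma concave_translate (r : ℝ → ℝ)
    (hr_conc : ∀ x y t : ℝ, 0 ≤ x → 0 ≤ y → 0 ≤ t → t ≤ 1 →
      t * r x + (1 - t) * r y ≤ r (t * x + (1 - t) * y))
    (a c d : ℝ) (ha : 0 ≤ a) (hac : a ≤ c) (hcd : c ≤ d) :
    r d - r c ≤ r (a + (d - c)) - r a := by
  rcases eq_or_lt_of_le (hac.trans hcd) with h | h
  · have hc : c = a := le_antisymm (h ▸ hcd) hac
    have hd : d = a := h.symm
    subst hc; subst hd; simp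
  · have hD : 0 < d - a := sub_pos.mpr h
    have hd0 : 0 ≤ d := ha.trans (hac.trans hcd)
    set t := (d - c) / (d - a) with ht
    set t' := (c - a) / (d - a) with ht'
    have ht0 : 0 ≤ t := div_nonneg (by linarith) hD.le
    have ht'0 : 0 ≤ t' := div_nonneg (by linarith) hD.le
    have htt' : t + t' = 1 := by
      rw [ht, ht', ← add_div, show d - c + (c - a) = d - a by ring,
        div_self hD.ne']
    have ht1 : t ≤ 1 := by linarith
    have ht'1 : t' ≤ 1 := by linarith
    have h1 := hr_conc d a t hd0 ha ht0 ht1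
    have h2 := hr_conc d a t' hd0 ha ht'0 ht'1
    have e1 : t * d + (1 - t) * a = a + (d - c) := by
      have hm : t * (d - a) = d - c := div_mul_cancel₀ _ hD.ne'
      linear_combination hm
    have e2 : t' * d + (1 - t') * a = c := by
      have hm : t' * (d - a) = c - a := div_mul_cancel₀ _ hD.ne'
      linear_combination hm
    rw [e1] at h1; rw [e2] at h2
    have e3 : t * r a + t' * r a = r a := by rw [← add_mul, htt', one_mul]
    have e4 : t * r d + t' * r d = r d := by rw [← add_mul, htt', one_mul]
    linarith [h1, h2, e3, e4]

/-- composition of a nondecreasing concave function with a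
nonnegative monotone submodular function is monotone submodular. -/
theorem concave_comp_submodular
    {E : Type*} [DecidableEq E] (g : Finset E → ℝ) (r : ℝ → ℝ)
    (hg_nonneg : ∀ A : Finset E, 0 ≤ g A)
    (hg_mono : ∀ A B : Finset E, A ⊆ B → g A ≤ g B)
    (hg_sub : ∀ (A B : Finset E) (p : E), A ⊆ B → p ∉ B →
      g (insert p B) - g B ≤ g (insert p A) - g A)
    (hr_mono : ∀ x y : ℝ, 0 ≤ x → x ≤ y → r x ≤ r y)
    (hr_conc : ∀ x y t : ℝ, 0 ≤ x → 0 ≤ y → 0 ≤ t → t ≤ 1 →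
      t * r x + (1 - t) * r y ≤ r (t * x + (1 - t) * y)) :
    (∀ A B : Finset E, A ⊆ B → r (g A) ≤ r (g B))
    ∧ (∀ (A B : Finset E) (p : E), A ⊆ B → p ∉ B →
        r (g (insert p B)) - r (g B) ≤ r (g (insert p A)) - r (g A)) := by
  constructor
  · intro A B hAB
    exact hr_mono _ _ (hg_nonneg A) (hg_mono A B hAB)
  · intro A B p hAB hpB
    set a := g A
    set b := g (insert p A)
    set c := g B
    set d := g (insert p B)
    have hab : a ≤ b := hg_mono _ _ (Finset.subset_insert _ _)
    have hac : a ≤ c := hg_mono _ _ hAB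
    have hcd : c ≤ d := hg_mono _ _ (Finset.subset_insert _ _)
    have hsub : d - c ≤ b - a := hg_sub A B p hAB hpB
    have h1 : r d - r c ≤ r (a + (d - c)) - r a :=
      concave_translate r hr_conc a c d (hg_nonneg A) hac hcd
    have h2 : r (a + (d - c)) ≤ r b := by
      apply hr_mono _ _ (by linarith [hg_nonneg A]) (by linarith)
    linarith
end

section
/- If g : Finset E → ℝ is a nonnegative monotone submodular set function, then A ↦ √(g(A)) is a monotone submodular set function. -/
lemma sqrt_key (a b a' b' : ℝ) (ha : 0 ≤ a) (hab : a ≤ b) (haa : a ≤ a')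
    (hbb : b ≤ b') (hab' : a' ≤ b') (hd : b' - b ≤ a' - a) :
    Real.sqrt b' - Real.sqrt b ≤ Real.sqrt a' - Real.sqrt a := by
  have ha' : 0 ≤ a' := le_trans ha haa
  have hb : 0 ≤ b := le_trans ha hab
  have hb' : 0 ≤ b' := le_trans hb hbb
  have hx := Real.sq_sqrt ha
  have hy := Real.sq_sqrt hb
  have hu := Real.sq_sqrt ha'
  have hv := Real.sq_sqrt hb'
  have h1 : Real.sqrt a ≤ Real.sqrt b := Real.sqrt_le_sqrt hab
  have h2 : Real.sqrt a ≤ Real.sqrt a' := Real.sqrt_le_sqrt haa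
  have h3 : Real.sqrt b ≤ Real.sqrt b' := Real.sqrt_le_sqrt hbb
  have h4 : Real.sqrt a' ≤ Real.sqrt b' := Real.sqrt_le_sqrt hab'
  have h0 : 0 ≤ Real.sqrt a := Real.sqrt_nonneg a
  nlinarith [mul_nonneg h0 h0, mul_nonneg (sub_nonneg.2 h3) (sub_nonneg.2 h1),
    mul_nonneg (sub_nonneg.2 h2) (sub_nonneg.2 h3)]

/-- square root of a nonnegative monotone submodular function
is monotone submodular. -/
theorem sqrt_comp_submodular
    {E : Type*} [DecidableEq E] (g : Finset E → ℝ)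
    (hg_nonneg : ∀ A : Finset E, 0 ≤ g A)
    (hg_mono : ∀ A B : Finset E, A ⊆ B → g A ≤ g B)
    (hg_sub : ∀ (A B : Finset E) (p : E), A ⊆ B → p ∉ B →
      g (insert p B) - g B ≤ g (insert p A) - g A) :
    (∀ A B : Finset E, A ⊆ B → Real.sqrt (g A) ≤ Real.sqrt (g B))
    ∧ (∀ (A B : Finset E) (p : E), A ⊆ B → p ∉ B →
        Real.sqrt (g (insert p B)) - Real.sqrt (g B)
          ≤ Real.sqrt (g (insert p A)) - Real.sqrt (g A)) := by
  refine ⟨fun A B h => Real.sqrt_le_sqrt (hg_mono A B h), fun A B p hAB hpB => ?_⟩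
  exact sqrt_key (g A) (g B) (g (insert p A)) (g (insert p B)) (hg_nonneg A)
    (hg_mono A B hAB) (hg_mono A _ (Finset.subset_insert p A))
    (hg_mono B _ (Finset.subset_insert p B))
    (hg_mono _ _ (Finset.insert_subset_insert p hAB))
    (hg_sub A B p hAB hpB)
end

section
/- Let D be a finite set of vectors in ℝ^d with all coordinates in [0,1], partitioned into I and T, and let w ∈ ℝ^d with w ≥ 0. Define f(A) = ∑_{u=1}^{d} w_u √( (∑_{x∈A} x_u)(|D| + ∑_{y∈D\A} y_u) + ∑_{x∈A_I} ∑_{y∈A_T} x_u y_u ). Then f is a monotone submodular set function on subsets of D. -/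
/-- Auxiliary quadratic form. -/
def Gfun (n s a b : ℝ) : ℝ := (a + b) * (n + s - (a + b)) + a * b

lemma Gfun_comm (n s a b : ℝ) : Gfun n s a b = Gfun n s b a := by
  unfold Gfun; ring

lemma Gfun_nonneg {n s a b : ℝ} (ha : 0 ≤ a) (hb : 0 ≤ b) (hs : a + b ≤ s)
    (hsn : s ≤ n) : 0 ≤ Gfun n s a b := by
  unfold Gfun
  nlinarith [mul_nonneg ha hb, mul_nonneg (add_nonneg ha hb) (by linarith : (0:ℝ) ≤ n + s - (a + b))]

lemma Gfun_mono {n s a b a2 b2 : ℝ} (ha : 0 ≤ a) (hb : 0 ≤ b)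
    (ha2 : a ≤ a2) (hb2 : b ≤ b2) (hs : a2 + b2 ≤ s) (hsn : s ≤ n) :
    Gfun n s a b ≤ Gfun n s a2 b2 := by
  have key : Gfun n s a2 b2 - Gfun n s a b
      = (a2 - a) * (n + s - a - a2 - b2) + (b2 - b) * (n + s - a - b - b2) := by
    unfold Gfun; ring
  have h1 : 0 ≤ (a2 - a) * (n + s - a - a2 - b2) :=
    mul_nonneg (by linarith) (by linarith)
  have h2 : 0 ≤ (b2 - b) * (n + s - a - b - b2) :=
    mul_nonneg (by linarith) (by linarith)
  linarith

/-- concavity of sqrt: differences shrink as the base grows. -/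
lemma sqrt_diff_aux (a b δ : ℝ) (ha : 0 ≤ a) (hab : a ≤ b) (hδ : 0 ≤ δ) :
    Real.sqrt (b + δ) - Real.sqrt b ≤ Real.sqrt (a + δ) - Real.sqrt a := by
  have hb : 0 ≤ b := ha.trans hab
  have key : Real.sqrt (b + δ) + Real.sqrt a ≤ Real.sqrt (a + δ) + Real.sqrt b := by
    have hL : 0 ≤ Real.sqrt (b + δ) + Real.sqrt a := by positivity
    have hR : 0 ≤ Real.sqrt (a + δ) + Real.sqrt b := by positivity
    have hmul : Real.sqrt (b + δ) * Real.sqrt a ≤ Real.sqrt (a + δ) * Real.sqrt b := by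
      rw [← Real.sqrt_mul (by linarith), ← Real.sqrt_mul (by linarith)]
      apply Real.sqrt_le_sqrt
      nlinarith
    have e1 : Real.sqrt (b + δ) ^ 2 = b + δ := Real.sq_sqrt (by linarith)
    have e2 : Real.sqrt a ^ 2 = a := Real.sq_sqrt ha
    have e3 : Real.sqrt (a + δ) ^ 2 = a + δ := Real.sq_sqrt (by linarith)
    have e4 : Real.sqrt b ^ 2 = b := Real.sq_sqrt hb
    have hsq : (Real.sqrt (b + δ) + Real.sqrt a) ^ 2
        ≤ (Real.sqrt (a + δ) + Real.sqrt b) ^ 2 := by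
      have expand1 : (Real.sqrt (b + δ) + Real.sqrt a) ^ 2
          = Real.sqrt (b + δ) ^ 2 + 2 * (Real.sqrt (b + δ) * Real.sqrt a)
            + Real.sqrt a ^ 2 := by ring
      have expand2 : (Real.sqrt (a + δ) + Real.sqrt b) ^ 2
          = Real.sqrt (a + δ) ^ 2 + 2 * (Real.sqrt (a + δ) * Real.sqrt b)
            + Real.sqrt b ^ 2 := by ring
      rw [expand1, expand2, e1, e2, e3, e4]
      linarith
    calc Real.sqrt (b + δ) + Real.sqrt a
        = Real.sqrt ((Real.sqrt (b + δ) + Real.sqrt a) ^ 2) := (Real.sqrt_sq hL).symm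
      _ ≤ Real.sqrt ((Real.sqrt (a + δ) + Real.sqrt b) ^ 2) := Real.sqrt_le_sqrt hsq
      _ = Real.sqrt (a + δ) + Real.sqrt b := Real.sqrt_sq hR
  linarith

lemma sqrt_submod (a a' b b' : ℝ) (ha : 0 ≤ a) (hab : a ≤ b) (hbb : b ≤ b')
    (hdiff : b' - b ≤ a' - a) :
    Real.sqrt b' - Real.sqrt b ≤ Real.sqrt a' - Real.sqrt a := by
  have hδ : 0 ≤ a' - a := le_trans (by linarith) hdiff
  have h1 : Real.sqrt b' ≤ Real.sqrt (b + (a' - a)) := Real.sqrt_le_sqrt (by linarith)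
  have h2 := sqrt_diff_aux a b (a' - a) ha hab hδ
  have h3 : a + (a' - a) = a' := by ring
  rw [h3] at h2
  linarith

lemma G_submod_sqrt (n s a b a2 b2 v : ℝ)
    (ha : 0 ≤ a) (hb : 0 ≤ b) (ha2 : a ≤ a2) (hb2 : b ≤ b2) (hv : 0 ≤ v)
    (hs : a2 + b2 + v ≤ s) (hsn : s ≤ n) :
    Real.sqrt (Gfun n s (v + a2) b2) - Real.sqrt (Gfun n s a2 b2)
      ≤ Real.sqrt (Gfun n s (v + a) b) - Real.sqrt (Gfun n s a b) := by
  apply sqrt_submod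
  · exact Gfun_nonneg ha hb (by linarith) hsn
  · exact Gfun_mono ha hb ha2 hb2 (by linarith) hsn
  · have key : Gfun n s (v + a2) b2 - Gfun n s a2 b2 = v * (n + s - 2 * a2 - b2 - v) := by
      unfold Gfun; ring
    nlinarith [mul_nonneg hv (by linarith : (0:ℝ) ≤ n + s - 2 * a2 - b2 - v)]
  · have key1 : Gfun n s (v + a2) b2 - Gfun n s a2 b2 = v * (n + s - 2 * a2 - b2 - v) := by
      unfold Gfun; ring
    have key2 : Gfun n s (v + a) b - Gfun n s a b = v * (n + s - 2 * a - b - v) := by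
      unfold Gfun; ring
    rw [key1, key2]
    apply mul_le_mul_of_nonneg_left (by linarith) hv

lemma G_submod_sqrt' (n s a b a2 b2 v : ℝ)
    (ha : 0 ≤ a) (hb : 0 ≤ b) (ha2 : a ≤ a2) (hb2 : b ≤ b2) (hv : 0 ≤ v)
    (hs : a2 + b2 + v ≤ s) (hsn : s ≤ n) :
    Real.sqrt (Gfun n s a2 (v + b2)) - Real.sqrt (Gfun n s a2 b2)
      ≤ Real.sqrt (Gfun n s a (v + b)) - Real.sqrt (Gfun n s a b) := by
  have h := G_submod_sqrt n s b a b2 a2 v hb ha hb2 ha2 hv (by linarith) hsn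
  rw [Gfun_comm n s a2 (v + b2), Gfun_comm n s a2 b2, Gfun_comm n s a (v + b),
    Gfun_comm n s a b]
  exact h

/-- the deep submodular function f is monotone submodular. -/
theorem deep_submodular_monotone_submodular
    {E : Type*} [DecidableEq E] (d : ℕ) (D I T : Finset E)
    (x : E → Fin d → ℝ) (w : Fin d → ℝ)
    (hpart : I ∪ T = D) (hdisj : Disjoint I T)
    (hx0 : ∀ e ∈ D, ∀ u, 0 ≤ x e u) (hx1 : ∀ e ∈ D, ∀ u, x e u ≤ 1)
    (hw : ∀ u, 0 ≤ w u)
    (f : Finset E → ℝ)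
    (hf : ∀ S : Finset E,
      f S = ∑ u, w u * Real.sqrt
        ((∑ e ∈ S, x e u) * ((D.card : ℝ) + ∑ y ∈ D \ S, x y u)
          + ∑ a ∈ S ∩ I, ∑ b ∈ S ∩ T, x a u * x b u)) :
    (∀ A B : Finset E, A ⊆ B → B ⊆ D → f A ≤ f B)
    ∧ (∀ (A B : Finset E) (p : E), A ⊆ B → B ⊆ D → p ∈ D \ B →
        f (insert p B) - f B ≤ f (insert p A) - f A) := by
  classical
  set n : ℝ := (D.card : ℝ) with hn
  have hsplit : ∀ S : Finset E, S ⊆ D → ∀ u : Fin d,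
      (∑ e ∈ S, x e u) = (∑ e ∈ S ∩ I, x e u) + (∑ e ∈ S ∩ T, x e u) := by
    intro S hS u
    have hdisj' : Disjoint (S ∩ I) (S ∩ T) := hdisj.mono inf_le_right inf_le_right
    have hunion : (S ∩ I) ∪ (S ∩ T) = S := by
      rw [← Finset.inter_union_distrib_left, hpart, Finset.inter_eq_left.mpr hS]
    conv_lhs => rw [← hunion]
    exact Finset.sum_union hdisj'
  have hval : ∀ S : Finset E, S ⊆ D → ∀ u : Fin d,
      (∑ e ∈ S, x e u) * (n + ∑ y ∈ D \ S, x y u)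
        + ∑ a ∈ S ∩ I, ∑ b ∈ S ∩ T, x a u * x b u
      = Gfun n (∑ e ∈ D, x e u) (∑ e ∈ S ∩ I, x e u) (∑ e ∈ S ∩ T, x e u) := by
    intro S hS u
    have hsd : (∑ y ∈ D \ S, x y u) = (∑ e ∈ D, x e u) - ∑ e ∈ S, x e u :=
      Finset.sum_sdiff_eq_sub hS
    rw [hsd, hsplit S hS u, ← Finset.sum_mul_sum]
    unfold Gfun; ring
  have hnonneg : ∀ S : Finset E, S ⊆ D → ∀ u : Fin d, 0 ≤ ∑ e ∈ S, x e u :=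
    fun S hS u => Finset.sum_nonneg (fun e he => hx0 e (hS he) u)
  have hsDn : ∀ u : Fin d, (∑ e ∈ D, x e u) ≤ n := by
    intro u
    calc ∑ e ∈ D, x e u ≤ ∑ _e ∈ D, (1 : ℝ) :=
          Finset.sum_le_sum (fun e he => hx1 e he u)
      _ = n := by simp [hn]
  have hmonoS : ∀ A B : Finset E, A ⊆ B → B ⊆ D → ∀ u : Fin d,
      (∑ e ∈ A, x e u) ≤ ∑ e ∈ B, x e u := fun A B hAB hBD u =>
    Finset.sum_le_sum_of_subset_of_nonneg hAB (fun e heB _ => hx0 e (hBD heB) u)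
  constructor
  · -- monotonicity
    intro A B hAB hBD
    have hAD : A ⊆ D := hAB.trans hBD
    rw [hf, hf]
    apply Finset.sum_le_sum
    intro u _
    apply mul_le_mul_of_nonneg_left _ (hw u)
    apply Real.sqrt_le_sqrt
    rw [hval A hAD u, hval B hBD u]
    have h1 : 0 ≤ ∑ e ∈ A ∩ I, x e u :=
      hnonneg _ (Finset.inter_subset_left.trans hAD) u
    have h2 : 0 ≤ ∑ e ∈ A ∩ T, x e u :=
      hnonneg _ (Finset.inter_subset_left.trans hAD) u
    have h3 : (∑ e ∈ A ∩ I, x e u) ≤ ∑ e ∈ B ∩ I, x e u :=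
      hmonoS _ _ (Finset.inter_subset_inter hAB Finset.Subset.rfl)
        (Finset.inter_subset_left.trans hBD) u
    have h4 : (∑ e ∈ A ∩ T, x e u) ≤ ∑ e ∈ B ∩ T, x e u :=
      hmonoS _ _ (Finset.inter_subset_inter hAB Finset.Subset.rfl)
        (Finset.inter_subset_left.trans hBD) u
    have h5 : (∑ e ∈ B ∩ I, x e u) + (∑ e ∈ B ∩ T, x e u) ≤ ∑ e ∈ D, x e u := by
      rw [← hsplit B hBD u]; exact hmonoS B D hBD Finset.Subset.rfl u
    exact Gfun_mono h1 h2 h3 h4 h5 (hsDn u)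
  · -- submodularity
    intro A B p hAB hBD hp
    obtain ⟨hpD, hpB⟩ := Finset.mem_sdiff.mp hp
    have hpA : p ∉ A := fun h => hpB (hAB h)
    have hAD : A ⊆ D := hAB.trans hBD
    have hA'D : insert p A ⊆ D := Finset.insert_subset hpD hAD
    have hB'D : insert p B ⊆ D := Finset.insert_subset hpD hBD
    rw [hf (insert p B), hf B, hf (insert p A), hf A, ← Finset.sum_sub_distrib,
      ← Finset.sum_sub_distrib]
    apply Finset.sum_le_sum
    intro u _
    rw [← mul_sub, ← mul_sub]
    apply mul_le_mul_of_nonneg_left _ (hw u)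
    rw [hval (insert p B) hB'D u, hval B hBD u, hval (insert p A) hA'D u,
      hval A hAD u]
    -- common numeric facts
    have h1 : 0 ≤ ∑ e ∈ A ∩ I, x e u :=
      hnonneg _ (Finset.inter_subset_left.trans hAD) u
    have h2 : 0 ≤ ∑ e ∈ A ∩ T, x e u :=
      hnonneg _ (Finset.inter_subset_left.trans hAD) u
    have h3 : (∑ e ∈ A ∩ I, x e u) ≤ ∑ e ∈ B ∩ I, x e u :=
      hmonoS _ _ (Finset.inter_subset_inter hAB Finset.Subset.rfl)
        (Finset.inter_subset_left.trans hBD) u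
    have h4 : (∑ e ∈ A ∩ T, x e u) ≤ ∑ e ∈ B ∩ T, x e u :=
      hmonoS _ _ (Finset.inter_subset_inter hAB Finset.Subset.rfl)
        (Finset.inter_subset_left.trans hBD) u
    have hv : 0 ≤ x p u := hx0 p hpD u
    have h7 : x p u + ((∑ e ∈ B ∩ I, x e u) + (∑ e ∈ B ∩ T, x e u))
        ≤ ∑ e ∈ D, x e u := by
      have h := hmonoS (insert p B) D hB'D Finset.Subset.rfl u
      rwa [Finset.sum_insert hpB, hsplit B hBD u] at h
    have hpIT : p ∈ I ∨ p ∈ T := by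
      rw [← hpart] at hpD; exact Finset.mem_union.mp hpD
    rcases hpIT with hpI | hpT
    · -- p ∈ I
      have hpT : p ∉ T := Finset.disjoint_left.mp hdisj hpI
      have eAI : (insert p A) ∩ I = insert p (A ∩ I) := Finset.insert_inter_of_mem hpI
      have eAT : (insert p A) ∩ T = A ∩ T := Finset.insert_inter_of_notMem hpT
      have eBI : (insert p B) ∩ I = insert p (B ∩ I) := Finset.insert_inter_of_mem hpI
      have eBT : (insert p B) ∩ T = B ∩ T := Finset.insert_inter_of_notMem hpT
      have hpAI : p ∉ A ∩ I := fun h => hpA (Finset.mem_inter.mp h).1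
      have hpBI : p ∉ B ∩ I := fun h => hpB (Finset.mem_inter.mp h).1
      rw [eAI, eAT, eBI, eBT, Finset.sum_insert hpAI, Finset.sum_insert hpBI]
      exact G_submod_sqrt n (∑ e ∈ D, x e u) _ _ _ _ (x p u)
        h1 h2 h3 h4 hv (by linarith) (hsDn u)
    · -- p ∈ T
      have hpI : p ∉ I := Finset.disjoint_right.mp hdisj hpT
      have eAI : (insert p A) ∩ I = A ∩ I := Finset.insert_inter_of_notMem hpI
      have eAT : (insert p A) ∩ T = insert p (A ∩ T) := Finset.insert_inter_of_mem hpT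
      have eBI : (insert p B) ∩ I = B ∩ I := Finset.insert_inter_of_notMem hpI
      have eBT : (insert p B) ∩ T = insert p (B ∩ T) := Finset.insert_inter_of_mem hpT
      have hpAT : p ∉ A ∩ T := fun h => hpA (Finset.mem_inter.mp h).1
      have hpBT : p ∉ B ∩ T := fun h => hpB (Finset.mem_inter.mp h).1
      rw [eAI, eAT, eBI, eBT, Finset.sum_insert hpAT, Finset.sum_insert hpBT]
      exact G_submod_sqrt' n (∑ e ∈ D, x e u) _ _ _ _ (x p u)
        h1 h2 h3 h4 hv (by linarith) (hsDn u)
end
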